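/- Let H be a real Hilbert space, λ > 0, and φ : ℝ^d → H with ‖φ(z)‖_H ≤ 1 for all z. Let μ : ℝ^d → ℝ be a fixed function (the conditional mean E[X | Z = ·]). Let D = (X^{(0)},…,X^{(m)}, Y, Z) and D' = (X'^{(0)},…,X'^{(m)}, Y', Z') be two datasets of n rows each, where X^{(j)} = (x^{(j)}_1,…,x^{(j)}_n) ∈ ℝ^n, Y = (y_1,…,y_n) ∈ ℝ^n, Z = (z_1,…,z_n) ∈ (ℝ^d)^n, that differ in at most one row index. Assume |y_i|, |y'_i| ≤ 1 for all i, and that the exact residuals r^{(j)}_{X,i} = x^{(j)}_i − μ(z_i) and r'^{(j)}_{X,i} = x'^{(j)}_i − μ(z'_i) satisfy |r^{(j)}_{X,i}|, |r'^{(j)}_{X,i}| ≤ 1 for all i ∈ [n], j ∈ {0,…,m}. Let w_Y and w'_Y be KRR minimizers (regularization λ) for fitting Y to Z and Y' to Z' respectively, and define T_j = Σ_{i=1}^n r^{(j)}_{X,i}·(y_i − ⟨w_Y, φ(z_i)⟩) and T'_j = Σ_{i=1}^n r'^{(j)}_{X,i}·(y'_i − ⟨w'_Y, φ(z'_i)⟩).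 Then for every j ∈ {0,…,m}, |T_j − T'_j| ≤ C', where C' = 4(1 + √2/√λ + 2√2/λ^{3/2} + 2/λ). -/

import Mathlib

open scoped RealInnerProductSpace

/-!
Both KRR objectives are `λ/4`-strongly convex, so adding the two minimality inequalities, each
evaluated at the other minimizer, bounds `λ/2 ‖w_Y - w'_Y‖²` by the difference of the squared
losses on the single differing row, divided by `n`. Since minimizers have norm at most `√(2/λ)`,
that loss is Lipschitz in `w` with constant `2(1 + √(2/λ))`, whence
`n ‖w_Y - w'_Y‖ ≤ 8(1 + √(2/λ))/λ`.
In `T_j - T'_j` the differing row contributes at most `2(1 + √(2/λ))` and each of the other rows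
at most `‖w_Y - w'_Y‖`.
-/

open Finset

section KernelRidgeRegression

variable {ι H : Type*} [Fintype ι] [SeminormedAddCommGroup H] [InnerProductSpace ℝ H]

noncomputable def krrObjective (lam : ℝ) (u : ι → H) (y : ι → ℝ) (v : H) : ℝ :=
  lam / 2 * ‖v‖ ^ 2 + (1 / Fintype.card ι) * ∑ i, (y i - ⟪v, u i⟫) ^ 2

noncomputable def crtStatistic (r y : ι → ℝ) (u : ι → H) (w : H) : ℝ :=
  ∑ i, r i * (y i - ⟪w, u i⟫)

lemma abs_inner_le_norm_of_norm_le_one {u : H} (hu : ‖u‖ ≤ 1) (w : H) : |⟪w, u⟫| ≤ ‖w‖ :=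
  (abs_real_inner_le_norm w u).trans (mul_le_of_le_one_right (norm_nonneg w) hu)

lemma sq_sub_sub_sq_sub_le {B c s t : ℝ} (hc : |c| ≤ 1) (hs : |s| ≤ B) (ht : |t| ≤ B) :
    (c - t) ^ 2 - (c - s) ^ 2 ≤ 2 * (1 + B) * |s - t| := by
  have hsum : |2 * c - s - t| ≤ 2 * (1 + B) := by
    rw [abs_le] at hc hs ht ⊢
    constructor <;> linarith
  calc (c - t) ^ 2 - (c - s) ^ 2 = (s - t) * (2 * c - s - t) := by ring
    _ ≤ |s - t| * |2 * c - s - t| := (le_abs_self _).trans (abs_mul _ _).le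
    _ ≤ 2 * (1 + B) * |s - t| := by
      rw [mul_comm]; exact mul_le_mul_of_nonneg_right hsum (abs_nonneg _)

lemma sq_sub_inner_sub_sq_sub_inner_le {B c : ℝ} {u v w : H} (hu : ‖u‖ ≤ 1) (hc : |c| ≤ 1)
    (hv : ‖v‖ ≤ B) (hw : ‖w‖ ≤ B) :
    (c - ⟪w, u⟫) ^ 2 - (c - ⟪v, u⟫) ^ 2 ≤ 2 * (1 + B) * ‖v - w‖ := by
  have hB : 0 ≤ 1 + B := by linarith [norm_nonneg v]
  calc (c - ⟪w, u⟫) ^ 2 - (c - ⟪v, u⟫) ^ 2 ≤ 2 * (1 + B) * |⟪v, u⟫ - ⟪w, u⟫| :=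
        sq_sub_sub_sq_sub_le hc ((abs_inner_le_norm_of_norm_le_one hu v).trans hv)
          ((abs_inner_le_norm_of_norm_le_one hu w).trans hw)
    _ ≤ 2 * (1 + B) * ‖v - w‖ := by
      rw [← inner_sub_left]
      gcongr
      exact abs_inner_le_norm_of_norm_le_one hu _

lemma krrObjective_zero_le_one (lam : ℝ) (u : ι → H) {y : ι → ℝ} (hy : ∀ i, |y i| ≤ 1) :
    krrObjective lam u y 0 ≤ 1 := by
  have hsq : ∑ i, y i ^ 2 ≤ Fintype.card ι := by
    simpa using sum_le_card_nsmul univ (fun i => y i ^ 2) 1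
      (fun i _ => (sq_le_one_iff_abs_le_one _).mpr (hy i))
  simpa [krrObjective, div_eq_inv_mul] using div_le_one_of_le₀ hsq (Nat.cast_nonneg _)

lemma norm_le_sqrt_of_isMinimizer {lam : ℝ} (hlam : 0 < lam) {u : ι → H} {y : ι → ℝ}
    (hy : ∀ i, |y i| ≤ 1) {w : H} (hw : ∀ v, krrObjective lam u y w ≤ krrObjective lam u y v) :
    ‖w‖ ≤ √(2 / lam) := by
  have hloss : 0 ≤ (1 / (Fintype.card ι : ℝ)) * ∑ i, (y i - ⟪w, u i⟫) ^ 2 := by positivity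
  have hobj : lam / 2 * ‖w‖ ^ 2 + (1 / (Fintype.card ι : ℝ)) * ∑ i, (y i - ⟪w, u i⟫) ^ 2 ≤ 1 :=
    (hw 0).trans (krrObjective_zero_le_one lam u hy)
  apply Real.le_sqrt_of_sq_le
  rw [le_div_iff₀ hlam]
  linarith

lemma krrObjective_midpoint_le (lam : ℝ) (u : ι → H) (y : ι → ℝ) (v w : H) :
    krrObjective lam u y ((2⁻¹ : ℝ) • (v + w)) ≤
      (krrObjective lam u y v + krrObjective lam u y w) / 2 - lam / 8 * ‖v - w‖ ^ 2 := by
  have hnorm : ‖(2⁻¹ : ℝ) • (v + w)‖ ^ 2 = (‖v‖ ^ 2 + ‖w‖ ^ 2) / 2 - ‖v - w‖ ^ 2 / 4 := by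
    rw [norm_smul, mul_pow]
    norm_num
    linarith [parallelogram_law_with_norm ℝ v w]
  have hloss : ∑ i, (y i - ⟪(2⁻¹ : ℝ) • (v + w), u i⟫) ^ 2 ≤
      (∑ i, (y i - ⟪v, u i⟫) ^ 2 + ∑ i, (y i - ⟪w, u i⟫) ^ 2) / 2 := by
    rw [← sum_add_distrib, sum_div]
    gcongr with i
    rw [real_inner_smul_left, inner_add_left]
    nlinarith [sq_nonneg (⟪v, u i⟫ - ⟪w, u i⟫)]
  have hcard : (0 : ℝ) ≤ 1 / Fintype.card ι := by positivity
  unfold krrObjective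
  rw [hnorm]
  nlinarith [mul_le_mul_of_nonneg_left hloss hcard]

lemma krrObjective_add_le_of_isMinimizer {lam : ℝ} {u : ι → H} {y : ι → ℝ} {w : H}
    (hw : ∀ v, krrObjective lam u y w ≤ krrObjective lam u y v) (v : H) :
    lam / 4 * ‖v - w‖ ^ 2 + krrObjective lam u y w ≤ krrObjective lam u y v := by
  linarith [hw ((2⁻¹ : ℝ) • (v + w)), krrObjective_midpoint_le lam u y v w]

lemma krrObjective_sub_krrObjective_of_eqOn_ne {lam : ℝ} {u u' : ι → H} {y y' : ι → ℝ}
    {i₀ : ι} (hS : ∀ i, i ≠ i₀ → u i = u' i ∧ y i = y' i) (v : H) :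
    krrObjective lam u y v - krrObjective lam u' y' v =
      (1 / Fintype.card ι) * ((y i₀ - ⟪v, u i₀⟫) ^ 2 - (y' i₀ - ⟪v, u' i₀⟫) ^ 2) := by
  have hsum : ∑ i, (y i - ⟪v, u i⟫) ^ 2 - ∑ i, (y' i - ⟪v, u' i⟫) ^ 2 =
      (y i₀ - ⟪v, u i₀⟫) ^ 2 - (y' i₀ - ⟪v, u' i₀⟫) ^ 2 := by
    rw [← sum_sub_distrib]
    refine sum_eq_single_of_mem i₀ (mem_univ _) fun i _ hi => ?_
    obtain ⟨hu, hy⟩ := hS i hi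
    rw [hu, hy, sub_self]
  unfold krrObjective
  rw [← hsum]
  ring

lemma card_mul_norm_sub_le_of_isMinimizer {lam : ℝ} (hlam : 0 < lam) {u u' : ι → H}
    {y y' : ι → ℝ} (hu : ∀ i, ‖u i‖ ≤ 1) (hu' : ∀ i, ‖u' i‖ ≤ 1)
    (hy : ∀ i, |y i| ≤ 1) (hy' : ∀ i, |y' i| ≤ 1)
    {i₀ : ι} (hS : ∀ i, i ≠ i₀ → u i = u' i ∧ y i = y' i) {w w' : H}
    (hw : ∀ v, krrObjective lam u y w ≤ krrObjective lam u y v)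
    (hw' : ∀ v, krrObjective lam u' y' w' ≤ krrObjective lam u' y' v) :
    Fintype.card ι * ‖w - w'‖ ≤ 8 * (1 + √(2 / lam)) / lam := by
  set B := √(2 / lam)
  set N : ℝ := (Fintype.card ι : ℝ)
  have hN : 0 < N := Nat.cast_pos.mpr (Fintype.card_pos_iff.mpr ⟨i₀⟩)
  have hwB := norm_le_sqrt_of_isMinimizer hlam hy hw
  have hw'B := norm_le_sqrt_of_isMinimizer hlam hy' hw'
  have hrow := sq_sub_inner_sub_sq_sub_inner_le (hu i₀) (hy i₀) hwB hw'B
  have hrow' := sq_sub_inner_sub_sq_sub_inner_le (hu' i₀) (hy' i₀) hw'B hwB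
  rw [norm_sub_rev w'] at hrow'
  have hstab : lam / 2 * ‖w - w'‖ ^ 2 ≤ 1 / N * (4 * (1 + B) * ‖w - w'‖) := by
    have h := krrObjective_add_le_of_isMinimizer hw w'
    have h' := krrObjective_add_le_of_isMinimizer hw' w
    rw [norm_sub_rev w'] at h
    have hd := krrObjective_sub_krrObjective_of_eqOn_ne (lam := lam) hS w
    have hd' := krrObjective_sub_krrObjective_of_eqOn_ne (lam := lam) hS w'
    have hrows := mul_le_mul_of_nonneg_left (add_le_add hrow hrow') (by positivity : 0 ≤ 1 / N)
    linarith
  have hscaled : lam / 2 * (N * ‖w - w'‖) * ‖w - w'‖ ≤ 4 * (1 + B) * ‖w - w'‖ :=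
    calc lam / 2 * (N * ‖w - w'‖) * ‖w - w'‖ = N * (lam / 2 * ‖w - w'‖ ^ 2) := by ring
      _ ≤ N * (1 / N * (4 * (1 + B) * ‖w - w'‖)) := by gcongr
      _ = 4 * (1 + B) * ‖w - w'‖ := by field_simp
  rw [le_div_iff₀ hlam]
  rcases (norm_nonneg (w - w')).eq_or_lt with hzero | hpos
  · rw [← hzero, mul_zero, zero_mul]
    positivity
  · linarith [le_of_mul_le_mul_right hscaled hpos]

lemma abs_sum_sub_sum_le {a b : ι → ℝ} {A δ : ℝ} (i₀ : ι) (hA : |a i₀ - b i₀| ≤ A)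
    (hδ : ∀ i, i ≠ i₀ → |a i - b i| ≤ δ) (hδ₀ : 0 ≤ δ) :
    |∑ i, a i - ∑ i, b i| ≤ A + Fintype.card ι * δ := by
  classical
  have hrest : ∑ i ∈ univ.erase i₀, |a i - b i| ≤ Fintype.card ι * δ := by
    calc ∑ i ∈ univ.erase i₀, |a i - b i| ≤ (univ.erase i₀).card • δ :=
          sum_le_card_nsmul _ _ _ fun i hi => hδ i (ne_of_mem_erase hi)
      _ ≤ Fintype.card ι * δ := by
          rw [nsmul_eq_mul]
          gcongr
          exact_mod_cast card_erase_le
  calc |∑ i, a i - ∑ i, b i| ≤ ∑ i, |a i - b i| := by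
        rw [← sum_sub_distrib]; exact abs_sum_le_sum_abs _ _
    _ = |a i₀ - b i₀| + ∑ i ∈ univ.erase i₀, |a i - b i| :=
        (add_sum_erase _ _ (mem_univ i₀)).symm
    _ ≤ A + Fintype.card ι * δ := add_le_add hA hrest

lemma abs_crtStatistic_sub_le {B : ℝ} {r r' y y' : ι → ℝ} {u u' : ι → H} {w w' : H}
    (hr : ∀ i, |r i| ≤ 1) (hr' : ∀ i, |r' i| ≤ 1) (hy : ∀ i, |y i| ≤ 1) (hy' : ∀ i, |y' i| ≤ 1)
    (hu : ∀ i, ‖u i‖ ≤ 1) (hu' : ∀ i, ‖u' i‖ ≤ 1) (hw : ‖w‖ ≤ B) (hw' : ‖w'‖ ≤ B) {i₀ : ι}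
    (hS : ∀ i, i ≠ i₀ → r i = r' i ∧ y i = y' i ∧ u i = u' i) :
    |crtStatistic r y u w - crtStatistic r' y' u' w'| ≤
      2 * (1 + B) + Fintype.card ι * ‖w - w'‖ := by
  have hterm : ∀ {ρ c : ℝ} {p v : H}, |ρ| ≤ 1 → |c| ≤ 1 → ‖p‖ ≤ 1 → ‖v‖ ≤ B →
      |ρ * (c - ⟪v, p⟫)| ≤ 1 + B := fun hρ hc hp hv => by
    rw [abs_mul]
    refine (mul_le_of_le_one_left (abs_nonneg _) hρ).trans ((abs_sub _ _).trans (add_le_add hc ?_))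
    exact (abs_inner_le_norm_of_norm_le_one hp _).trans hv
  refine abs_sum_sub_sum_le i₀ ?_ (fun i hi => ?_) (norm_nonneg _)
  · calc _ ≤ _ := abs_sub _ _
      _ ≤ 2 * (1 + B) := by
        linarith [hterm (hr i₀) (hy i₀) (hu i₀) hw, hterm (hr' i₀) (hy' i₀) (hu' i₀) hw']
  · obtain ⟨hr_eq, hy_eq, hu_eq⟩ := hS i hi
    rw [← hr_eq, ← hy_eq, ← hu_eq]
    have : r i * (y i - ⟪w, u i⟫) - r i * (y i - ⟪w', u i⟫) = r i * ⟪w' - w, u i⟫ := by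
      rw [inner_sub_left]; ring
    rw [this, abs_mul, norm_sub_rev]
    exact (mul_le_of_le_one_left (abs_nonneg _) (hr i)).trans
      (abs_inner_le_norm_of_norm_le_one (hu i) _)

end KernelRidgeRegression

lemma sensitivity_constant_eq {lam : ℝ} (hlam : 0 < lam) :
    4 * (1 + √2 / √lam + 2 * √2 / lam ^ ((3 : ℝ) / 2) + 2 / lam) =
      4 * (1 + √(2 / lam)) * (1 + 2 / lam) := by
  have hpow : lam ^ ((3 : ℝ) / 2) = lam * √lam := by
    rw [show (3 : ℝ) / 2 = 1 + 1 / 2 by norm_num, Real.rpow_add hlam, Real.rpow_one,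
      Real.sqrt_eq_rpow]
  have : √lam ≠ 0 := (Real.sqrt_pos.mpr hlam).ne'
  rw [hpow, Real.sqrt_div zero_le_two]
  field_simp
  ring

theorem crt_statistic_sensitivity_general
    {H : Type*} [NormedAddCommGroup H] [InnerProductSpace ℝ H]
    {d n m : ℕ}
    (lam : ℝ) (hlam : 0 < lam)
    (φ : EuclideanSpace ℝ (Fin d) → H) (hφ : ∀ z, ‖φ z‖ ≤ 1)
    (μ : EuclideanSpace ℝ (Fin d) → ℝ)
    (X X' : Fin (m + 1) → Fin n → ℝ) (y y' : Fin n → ℝ)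
    (z z' : Fin n → EuclideanSpace ℝ (Fin d))
    (hy : ∀ i, |y i| ≤ 1) (hy' : ∀ i, |y' i| ≤ 1)
    (hrX : ∀ j i, |X j i - μ (z i)| ≤ 1) (hrX' : ∀ j i, |X' j i - μ (z' i)| ≤ 1)
    (hneighbor : ∃ i₀ : Fin n, ∀ i, i ≠ i₀ →
      (∀ j, X j i = X' j i) ∧ y i = y' i ∧ z i = z' i)
    (wY wY' : H)
    (hwY : ∀ v : H,
      lam / 2 * ‖wY‖ ^ 2 + (1 / n) * ∑ i, (y i - ⟪wY, φ (z i)⟫) ^ 2 ≤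
        lam / 2 * ‖v‖ ^ 2 + (1 / n) * ∑ i, (y i - ⟪v, φ (z i)⟫) ^ 2)
    (hwY' : ∀ v : H,
      lam / 2 * ‖wY'‖ ^ 2 + (1 / n) * ∑ i, (y' i - ⟪wY', φ (z' i)⟫) ^ 2 ≤
        lam / 2 * ‖v‖ ^ 2 + (1 / n) * ∑ i, (y' i - ⟪v, φ (z' i)⟫) ^ 2) :
    ∀ j : Fin (m + 1),
      |(∑ i, (X j i - μ (z i)) * (y i - ⟪wY, φ (z i)⟫)) -
        (∑ i, (X' j i - μ (z' i)) * (y' i - ⟪wY', φ (z' i)⟫))| ≤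
      4 * (1 + Real.sqrt 2 / Real.sqrt lam + 2 * Real.sqrt 2 / lam ^ ((3 : ℝ) / 2) + 2 / lam) := by
  intro j
  obtain ⟨i₀, hS⟩ := hneighbor
  have hw : ∀ v, krrObjective lam (φ ∘ z) y wY ≤ krrObjective lam (φ ∘ z) y v := by
    simpa [krrObjective] using hwY
  have hw' : ∀ v, krrObjective lam (φ ∘ z') y' wY' ≤ krrObjective lam (φ ∘ z') y' v := by
    simpa [krrObjective] using hwY'
  have hstab := card_mul_norm_sub_le_of_isMinimizer hlam (fun i => hφ _) (fun i => hφ _) hy hy'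
    (fun i hi => ⟨congrArg φ (hS i hi).2.2, (hS i hi).2.1⟩) hw hw'
  have hT := abs_crtStatistic_sub_le (r := fun i => X j i - μ (z i))
    (r' := fun i => X' j i - μ (z' i)) (hrX j) (hrX' j) hy hy' (fun i => hφ _) (fun i => hφ _)
    (norm_le_sqrt_of_isMinimizer hlam hy hw) (norm_le_sqrt_of_isMinimizer hlam hy' hw')
    fun i hi => ⟨by rw [(hS i hi).1 j, (hS i hi).2.2], (hS i hi).2.1, congrArg φ (hS i hi).2.2⟩
  rw [sensitivity_constant_eq hlam]
  have hB : 0 ≤ √(2 / lam) := Real.sqrt_nonneg _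
  simp only [crtStatistic, Fintype.card_fin] at hT hstab
  calc _ ≤ 2 * (1 + √(2 / lam)) + 8 * (1 + √(2 / lam)) / lam := hT.trans (by linarith)
    _ ≤ 4 * (1 + √(2 / lam)) + 8 * (1 + √(2 / lam)) / lam := by linarith
    _ = 4 * (1 + √(2 / lam)) * (1 + 2 / lam) := by ring

/-- **Sensitivity of the CRT statistic.**
With a fixed conditional-mean function `μ = E[X | Z = ·]`, neighboring aggregated
datasets `D = (X^{(0)},…,X^{(m)}, Y, Z)` and `D'` (differing in at most one row),
`|y_i|, |y'_i| ≤ 1`, exact residuals `r^{(j)}_{X,i} = x^{(j)}_i − μ(z_i)` bounded by `1`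
in absolute value, and `w_Y, w'_Y` KRR minimizers (regularization `λ`) for fitting
`Y` to `Z` resp. `Y'` to `Z'`, the statistics
`T_j = Σ_i r^{(j)}_{X,i} (y_i − ⟨w_Y, φ(z_i)⟩)` satisfy
`|T_j − T'_j| ≤ 4(1 + √2/√λ + 2√2/λ^{3/2} + 2/λ)` for every `j`. -/
theorem crt_statistic_sensitivity
    {H : Type*} [NormedAddCommGroup H] [InnerProductSpace ℝ H] [CompleteSpace H]
    {d n m : ℕ} (hn : 0 < n)
    (lam : ℝ) (hlam : 0 < lam)
    (φ : EuclideanSpace ℝ (Fin d) → H) (hφ : ∀ z, ‖φ z‖ ≤ 1)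
    (μ : EuclideanSpace ℝ (Fin d) → ℝ)
    (X X' : Fin (m + 1) → Fin n → ℝ) (y y' : Fin n → ℝ)
    (z z' : Fin n → EuclideanSpace ℝ (Fin d))
    (hy : ∀ i, |y i| ≤ 1) (hy' : ∀ i, |y' i| ≤ 1)
    (hrX : ∀ j i, |X j i - μ (z i)| ≤ 1) (hrX' : ∀ j i, |X' j i - μ (z' i)| ≤ 1)
    (hneighbor : ∃ i₀ : Fin n, ∀ i, i ≠ i₀ →
      (∀ j, X j i = X' j i) ∧ y i = y' i ∧ z i = z' i)
    (wY wY' : H)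
    (hwY : ∀ v : H,
      lam / 2 * ‖wY‖ ^ 2 + (1 / n) * ∑ i, (y i - ⟪wY, φ (z i)⟫) ^ 2 ≤
        lam / 2 * ‖v‖ ^ 2 + (1 / n) * ∑ i, (y i - ⟪v, φ (z i)⟫) ^ 2)
    (hwY' : ∀ v : H,
      lam / 2 * ‖wY'‖ ^ 2 + (1 / n) * ∑ i, (y' i - ⟪wY', φ (z' i)⟫) ^ 2 ≤
        lam / 2 * ‖v‖ ^ 2 + (1 / n) * ∑ i, (y' i - ⟪v, φ (z' i)⟫) ^ 2) :
    ∀ j : Fin (m + 1),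
      |(∑ i, (X j i - μ (z i)) * (y i - ⟪wY, φ (z i)⟫)) -
        (∑ i, (X' j i - μ (z' i)) * (y' i - ⟪wY', φ (z' i)⟫))| ≤
      4 * (1 + Real.sqrt 2 / Real.sqrt lam + 2 * Real.sqrt 2 / lam ^ ((3 : ℝ) / 2) + 2 / lam) :=
  crt_statistic_sensitivity_general lam hlam φ hφ μ X X' y y' z z' hy hy' hrX hrX' hneighbor wY wY'
    hwY hwY'
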